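/- Let −1 < p < 0 and let j_{p,1} be the first positive zero of the Bessel function J_p. For all x with 0 < |x| < j_{p,1}, the Turán-type inequality 𝓙_{p+1}(x)² − ((p+1)/(p+2))·𝓙_p(x)·𝓙_{p+2}(x) > 0 holds. -/

import Mathlib

/-!
With f = 𝓙_p, g = 𝓙_{p+1}, h = 𝓙_{p+2}, the recurrence g - f = x² h / (4(p+1)(p+2)) gives
x⁴ (g² - (p+1)/(p+2) f h) = (x² g - 2(p+1)² f)² + 4(p+1)² (x² - (p+1)²) f²,
which is positive for p + 1 < |x| < j_{p,1}, since f does not vanish there.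
For |x| ≤ p + 1 < 1 the three series are alternating with decreasing terms, so 0 ≤ f, h ≤ 1
and g > 3/4, while (p+1)/(p+2) < 1/2.
-/

open Real

noncomputable def besselJn (p x : ℝ) : ℝ :=
  ∑' n : ℕ, (-(1:ℝ)/4)^n * x^(2*n) / ((Real.Gamma (p+n+1) / Real.Gamma (p+1)) * n.factorial)

noncomputable def besselIn (p x : ℝ) : ℝ :=
  ∑' n : ℕ, ((1:ℝ)/4)^n * x^(2*n) / ((Real.Gamma (p+n+1) / Real.Gamma (p+1)) * n.factorial)

noncomputable def besselJ (p x : ℝ) : ℝ :=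
  ∑' n : ℕ, (-1:ℝ)^n * (x/2)^(p+2*n) / (n.factorial * Real.Gamma (p+n+1))

open Filter Finset

noncomputable def besselJnTerm (p y : ℝ) (n : ℕ) : ℝ :=
  y ^ n / ((Gamma (p + n + 1) / Gamma (p + 1)) * n.factorial)

theorem besselJn_eq_tsum (p x : ℝ) :
    besselJn p x = ∑' n : ℕ, (-1) ^ n * besselJnTerm p (x ^ 2 / 4) n := by
  refine tsum_congr fun n => ?_
  rw [besselJnTerm, pow_mul, neg_div, neg_pow, div_pow, div_pow]
  ring

theorem besselJn_abs (p x : ℝ) : besselJn p |x| = besselJn p x := by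
  simp only [besselJn_eq_tsum, sq_abs]

section Term

variable {p : ℝ}

theorem Gamma_add_natCast_add_one_pos (hp : -1 < p) (n : ℕ) : 0 < Gamma (p + n + 1) :=
  Gamma_pos_of_pos (by have := n.cast_nonneg (α := ℝ); linarith)

theorem besselJnTerm_eq (hp : -1 < p) (y : ℝ) (n : ℕ) :
    besselJnTerm p y n = y ^ n * Gamma (p + 1) / (Gamma (p + n + 1) * n.factorial) := by
  have := (Gamma_pos_of_pos (by linarith : 0 < p + 1)).ne'
  have := (Gamma_add_natCast_add_one_pos hp n).ne'
  rw [besselJnTerm]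
  field_simp

theorem besselJnTerm_zero (hp : -1 < p) (y : ℝ) : besselJnTerm p y 0 = 1 := by
  simpa [besselJnTerm_eq hp] using (Gamma_pos_of_pos (by linarith : 0 < p + 1)).ne'

theorem besselJnTerm_nonneg (hp : -1 < p) {y : ℝ} (hy : 0 ≤ y) (n : ℕ) :
    0 ≤ besselJnTerm p y n := by
  have := Gamma_pos_of_pos (by linarith : 0 < p + 1)
  have := Gamma_add_natCast_add_one_pos hp n
  rw [besselJnTerm_eq hp]
  positivity

-- The Pochhammer identities `(p+1)_{n+1} = (p+1) (p+2)_n` and `(p+1) (p+2)_n = (p+n+1) (p+1)_n`.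
theorem besselJnTerm_succ_eq_mul_besselJnTerm_add_one (hp : -1 < p) (y : ℝ) (n : ℕ) :
    besselJnTerm p y (n + 1) = y / ((p + 1) * (n + 1)) * besselJnTerm (p + 1) y n := by
  have hp1 : p + 1 ≠ 0 := by linarith
  have hΓ := (Gamma_add_natCast_add_one_pos hp (n + 1)).ne'
  rw [besselJnTerm_eq hp, besselJnTerm_eq (by linarith), Gamma_add_one hp1, Nat.factorial_succ]
  push_cast at hΓ ⊢
  rw [show p + 1 + n + 1 = p + (n + 1) + 1 by ring]
  field_simp
  ring

theorem add_one_mul_besselJnTerm (hp : -1 < p) (y : ℝ) (n : ℕ) :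
    (p + 1) * besselJnTerm p y n = (p + n + 1) * besselJnTerm (p + 1) y n := by
  have hp1 : p + 1 ≠ 0 := by linarith
  have hpn : p + n + 1 ≠ 0 := by have := n.cast_nonneg (α := ℝ); linarith
  have hΓ := (Gamma_add_natCast_add_one_pos hp n).ne'
  rw [besselJnTerm_eq hp, besselJnTerm_eq (by linarith), Gamma_add_one hp1,
    show p + 1 + n + 1 = p + n + 1 + 1 by ring, Gamma_add_one hpn]
  field_simp

theorem besselJnTerm_succ (hp : -1 < p) (y : ℝ) (n : ℕ) :
    besselJnTerm p y (n + 1) = y / ((p + n + 1) * (n + 1)) * besselJnTerm p y n := by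
  have hp1 : p + 1 ≠ 0 := by linarith
  have hpn : p + n + 1 ≠ 0 := by have := n.cast_nonneg (α := ℝ); linarith
  have h := add_one_mul_besselJnTerm hp y n
  rw [besselJnTerm_succ_eq_mul_besselJnTerm_add_one hp]
  field_simp
  linear_combination (-y) * h

theorem besselJnTerm_antitone (hp : -1 < p) {y : ℝ} (hy : 0 ≤ y) (hyp : y ≤ p + 1) :
    Antitone (besselJnTerm p y) := by
  refine antitone_nat_of_succ_le fun n => ?_
  have hn : (0 : ℝ) ≤ n := n.cast_nonneg
  have hratio : y / ((p + n + 1) * (n + 1)) ≤ 1 := by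
    rw [div_le_one (mul_pos (by linarith) (by linarith))]
    nlinarith
  rw [besselJnTerm_succ hp]
  exact mul_le_of_le_one_left (besselJnTerm_nonneg hp hy n) hratio

theorem summable_besselJnTerm (hp : -1 < p) {y : ℝ} (hy : 0 ≤ y) :
    Summable (besselJnTerm p y) := by
  refine summable_of_ratio_norm_eventually_le (r := 1 / 2) (by norm_num) ?_
  filter_upwards [eventually_ge_atTop ⌈2 * y⌉₊] with n hn
  have hn : 2 * y ≤ n := Nat.ceil_le.mp hn
  have hratio : y / ((p + n + 1) * (n + 1)) ≤ 1 / 2 := by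
    rw [div_le_iff₀ (mul_pos (by linarith) (by linarith))]
    nlinarith
  rw [norm_of_nonneg (besselJnTerm_nonneg hp hy _), norm_of_nonneg (besselJnTerm_nonneg hp hy _),
    besselJnTerm_succ hp]
  exact mul_le_mul_of_nonneg_right hratio (besselJnTerm_nonneg hp hy n)

theorem summable_neg_one_pow_mul_besselJnTerm (hp : -1 < p) {y : ℝ} (hy : 0 ≤ y) :
    Summable fun n => (-1) ^ n * besselJnTerm p y n :=
  (summable_besselJnTerm hp hy).of_norm_bounded fun n => by
    simp [abs_of_nonneg (besselJnTerm_nonneg hp hy n)]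

theorem besselJnTerm_add_one_succ_sub (hp : -1 < p) (y : ℝ) (n : ℕ) :
    besselJnTerm (p + 1) y (n + 1) - besselJnTerm p y (n + 1) =
      -(y / ((p + 1) * (p + 2)) * besselJnTerm (p + 2) y n) := by
  have hp' : -1 < p + 1 := by linarith
  have hp1 : p + 1 ≠ 0 := by linarith
  have hp2 : p + 2 ≠ 0 := by linarith
  have h0 := besselJnTerm_succ_eq_mul_besselJnTerm_add_one hp y n
  have h1 := besselJnTerm_succ_eq_mul_besselJnTerm_add_one hp' y n
  have h2 := add_one_mul_besselJnTerm hp' y n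
  rw [show p + 1 + 1 = p + 2 by ring] at h1 h2
  rw [h0, h1]
  field_simp
  linear_combination (-y) * h2

end Term

section Bounds

variable {p x : ℝ}

theorem besselJn_le_one (hp : -1 < p) (hx : x ^ 2 / 4 ≤ p + 1) : besselJn p x ≤ 1 := by
  have hy : 0 ≤ x ^ 2 / 4 := by positivity
  have h := (besselJnTerm_antitone hp hy hx).tendsto_le_alternating_series
    (summable_neg_one_pow_mul_besselJnTerm hp hy).hasSum.tendsto_sum_nat 0
  simpa [besselJn_eq_tsum, besselJnTerm_zero hp] using h

theorem one_sub_le_besselJn (hp : -1 < p) (hx : x ^ 2 / 4 ≤ p + 1) :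
    1 - x ^ 2 / (4 * (p + 1)) ≤ besselJn p x := by
  have hy : 0 ≤ x ^ 2 / 4 := by positivity
  have h := (besselJnTerm_antitone hp hy hx).alternating_series_le_tendsto
    (summable_neg_one_pow_mul_besselJnTerm hp hy).hasSum.tendsto_sum_nat 1
  simp only [mul_one, sum_range_succ, range_one, sum_singleton, pow_zero, pow_one,
    besselJnTerm_zero hp, besselJnTerm_succ hp _ 0, CharP.cast_eq_zero, add_zero, zero_add,
    neg_mul, one_mul, add_neg_le_iff_le_add] at h
  rw [besselJn_eq_tsum, ← div_div]
  linarith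

theorem besselJn_nonneg (hp : -1 < p) (hx : x ^ 2 / 4 ≤ p + 1) : 0 ≤ besselJn p x := by
  refine le_trans ?_ (one_sub_le_besselJn hp hx)
  rw [sub_nonneg, div_le_one (by linarith)]
  linarith

end Bounds

theorem besselJn_add_one_sub_besselJn {p : ℝ} (hp : -1 < p) (x : ℝ) :
    besselJn (p + 1) x - besselJn p x = x ^ 2 / (4 * (p + 1) * (p + 2)) * besselJn (p + 2) x := by
  have hy : 0 ≤ x ^ 2 / 4 := by positivity
  have hs₁ := summable_neg_one_pow_mul_besselJnTerm (by linarith : -1 < p + 1) hy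
  have hs₀ := summable_neg_one_pow_mul_besselJnTerm hp hy
  rw [besselJn_eq_tsum, besselJn_eq_tsum, besselJn_eq_tsum, ← hs₁.tsum_sub hs₀,
    (hs₁.sub hs₀).tsum_eq_zero_add, ← tsum_mul_left, mul_assoc, ← div_div]
  simp only [pow_zero, one_mul, besselJnTerm_zero hp, besselJnTerm_zero (by linarith : -1 < p + 1),
    sub_self, zero_add, ← mul_sub, besselJnTerm_add_one_succ_sub hp]
  refine tsum_congr fun n => ?_
  ring

theorem besselJ_eq_mul_besselJn {p x : ℝ} (hp : -1 < p) (hx : 0 < x) :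
    besselJ p x = (x / 2) ^ p / Gamma (p + 1) * besselJn p x := by
  rw [besselJn_eq_tsum, ← tsum_mul_left]
  refine tsum_congr fun n => ?_
  have hΓ₀ := (Gamma_pos_of_pos (by linarith : 0 < p + 1)).ne'
  have hΓ := (Gamma_add_natCast_add_one_pos hp n).ne'
  have hrpow : (x / 2) ^ (p + 2 * n) = (x / 2) ^ p * (x ^ 2 / 4) ^ n := by
    rw [rpow_add (by positivity), show (2 * n : ℝ) = (2 * n : ℕ) by push_cast; ring, rpow_natCast,
      pow_mul]
    ring
  rw [besselJnTerm_eq hp, hrpow]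
  field_simp

theorem besselJn_ne_zero_of_lt {p x jp1 : ℝ} (hp : -1 < p)
    (hj : jp1 ∈ lowerBounds {x : ℝ | 0 < x ∧ besselJ p x = 0}) (hx0 : 0 < x) (hx : x < jp1) :
    besselJn p x ≠ 0 := by
  intro hzero
  have hJ : besselJ p x = 0 := by rw [besselJ_eq_mul_besselJn hp hx0, hzero, mul_zero]
  exact hx.not_ge (hj ⟨hx0, hJ⟩)

section Turan

variable {p x : ℝ}

theorem turan_pos_of_abs_le (hp1 : -1 < p) (hp2 : p < 0) (hx : |x| ≤ p + 1) :
    0 < besselJn (p + 1) x ^ 2 - (p + 1) / (p + 2) * besselJn p x * besselJn (p + 2) x := by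
  have hx2 : x ^ 2 ≤ (p + 1) ^ 2 := by rw [← sq_abs]; gcongr
  have hx1 : x ^ 2 < 1 := by nlinarith
  have hf : x ^ 2 / 4 ≤ p + 1 := by nlinarith
  have hh : x ^ 2 / 4 ≤ p + 2 + 1 := by linarith
  have hg : 3 / 4 < besselJn (p + 1) x := by
    have hlow := one_sub_le_besselJn (p := p + 1) (x := x) (by linarith) (by linarith)
    have : x ^ 2 / (4 * (p + 1 + 1)) < 1 / 4 := by
      rw [div_lt_iff₀ (by linarith)]
      nlinarith
    linarith
  have hfh : besselJn p x * besselJn (p + 2) x ≤ 1 :=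
    mul_le_one₀ (besselJn_le_one hp1 hf) (besselJn_nonneg (by linarith) hh)
      (besselJn_le_one (by linarith) hh)
  have hr : (p + 1) / (p + 2) < 1 / 2 := by rw [div_lt_iff₀ (by linarith)]; linarith
  have hr0 : 0 ≤ (p + 1) / (p + 2) := div_nonneg (by linarith) (by linarith)
  nlinarith [mul_le_mul_of_nonneg_left hfh hr0]

theorem turan_pos_of_sq_lt (hp : -1 < p) (hx : (p + 1) ^ 2 < x ^ 2) (hf : besselJn p x ≠ 0) :
    0 < besselJn (p + 1) x ^ 2 - (p + 1) / (p + 2) * besselJn p x * besselJn (p + 2) x := by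
  have hp1 : p + 1 ≠ 0 := by linarith
  have hp2 : p + 2 ≠ 0 := by linarith
  have hrec : x ^ 2 * besselJn (p + 2) x =
      4 * (p + 1) * (p + 2) * (besselJn (p + 1) x - besselJn p x) := by
    rw [besselJn_add_one_sub_besselJn hp x]
    field_simp
  set f := besselJn p x
  set g := besselJn (p + 1) x
  set h := besselJn (p + 2) x
  have hratio : (p + 1) / (p + 2) * (p + 2) = p + 1 := div_mul_cancel₀ _ hp2
  have hsos : (x ^ 2) ^ 2 * (g ^ 2 - (p + 1) / (p + 2) * f * h) =
      (x ^ 2 * g - 2 * (p + 1) ^ 2 * f) ^ 2 + 4 * (p + 1) ^ 2 * (x ^ 2 - (p + 1) ^ 2) * f ^ 2 := by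
    linear_combination (-x ^ 2 * ((p + 1) / (p + 2)) * f) * hrec
      - 4 * (p + 1) * x ^ 2 * f * (g - f) * hratio
  have hpos : 0 < (x ^ 2) ^ 2 * (g ^ 2 - (p + 1) / (p + 2) * f * h) := by
    rw [hsos]
    have : 0 < x ^ 2 - (p + 1) ^ 2 := sub_pos.2 hx
    positivity
  exact pos_of_mul_pos_right hpos (by positivity)

end Turan

theorem turan_bessel (p : ℝ) (hp1 : -1 < p) (hp2 : p < 0) (jp1 : ℝ)
    (hj : IsLeast {x : ℝ | 0 < x ∧ besselJ p x = 0} jp1)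
    (x : ℝ) (hx0 : 0 < |x|) (hx : |x| < jp1) :
    besselJn (p+1) x ^ 2 - ((p+1)/(p+2)) * besselJn p x * besselJn (p+2) x > 0 := by
  rcases le_or_gt |x| (p + 1) with hsmall | hlarge
  · exact turan_pos_of_abs_le hp1 hp2 hsmall
  · have hf : besselJn p x ≠ 0 := by
      rw [← besselJn_abs]
      exact besselJn_ne_zero_of_lt hp1 hj.2 hx0 hx
    have hx2 : (p + 1) ^ 2 < x ^ 2 := by
      rw [← sq_abs x]
      exact pow_lt_pow_left₀ hlarge (by linarith) two_ne_zero
    exact turan_pos_of_sq_lt hp1 hx2 hf
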